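/- arXiv:1106.2302 — 9 statements merged into one kernel-verified Lean document; each statement's English description precedes it below -/
import Mathlib

section
/- For all real numbers x and α with 0 ≤ x ≤ 1 and 0 ≤ α ≤ 1, one has (2 - 2^α) * x^α * (1-x)^α ≤ (1-x)^α - (1 - x^α). -/
/-! The inequality is invariant under `x ↦ 1 - x`, so we may take `x ≤ 1 / 2`. There
`(1 - x) ^ α ≤ 1` reduces it to `1 ≤ (2 ^ α - 1) * x ^ α + (1 - x) ^ α`. The right-hand side is
concave in `x` and equals `1` both at `x = 0` and at `x = 1 / 2`, so it is at least `1` between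
them. -/

open Real Set

lemma concaveOn_one_sub_rpow {α : ℝ} (hα0 : 0 ≤ α) (hα1 : α ≤ 1) :
    ConcaveOn ℝ (Iic 1) fun x : ℝ ↦ (1 - x) ^ α := by
  refine ⟨convex_Iic 1, fun x hx y hy a b ha hb hab ↦ ?_⟩
  have hcomb : 1 - (a • x + b • y) = a • (1 - x) + b • (1 - y) := by
    simp only [smul_eq_mul]; linear_combination -hab
  simp only [hcomb]
  exact (concaveOn_rpow hα0 hα1).2 (mem_Ici.2 (sub_nonneg.2 hx)) (mem_Ici.2 (sub_nonneg.2 hy))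
    ha hb hab

lemma one_le_two_rpow_sub_one_mul_rpow_add_one_sub_rpow {x α : ℝ} (hx0 : 0 ≤ x)
    (hx : x ≤ 1 / 2) (hα0 : 0 ≤ α) (hα1 : α ≤ 1) :
    1 ≤ (2 ^ α - 1) * x ^ α + (1 - x) ^ α := by
  have hcoef : 0 ≤ (2 : ℝ) ^ α - 1 := sub_nonneg.2 (one_le_rpow one_le_two hα0)
  have hconc : ConcaveOn ℝ (Icc 0 1) fun x : ℝ ↦ (2 ^ α - 1) * x ^ α + (1 - x) ^ α :=
    (((concaveOn_rpow hα0 hα1).smul hcoef).subset Icc_subset_Ici_self (convex_Icc 0 1)).add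
      ((concaveOn_one_sub_rpow hα0 hα1).subset Icc_subset_Iic_self (convex_Icc 0 1))
  have hmin := hconc.min_le_of_mem_segment (x := 0) (y := 1 / 2) (by norm_num) (by norm_num)
    (by rw [segment_eq_Icc (by norm_num)]; exact ⟨hx0, hx⟩)
  have h0 : (2 ^ α - 1) * (0 : ℝ) ^ α + (1 - 0) ^ α = 1 := by
    rcases hα0.eq_or_lt with rfl | hα
    · simp
    · simp [zero_rpow hα.ne']
  have hhalf : (2 ^ α - 1) * (1 / 2 : ℝ) ^ α + (1 - 1 / 2) ^ α = 1 := by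
    rw [show (1 - 1 / 2 : ℝ) = 1 / 2 by norm_num, ← add_one_mul, sub_add_cancel,
      ← mul_rpow (by norm_num) (by norm_num)]
    norm_num
  rwa [h0, hhalf, min_self] at hmin

lemma two_sub_two_rpow_mul_rpow_mul_rpow_le_of_le_half {x α : ℝ} (hx0 : 0 ≤ x)
    (hx : x ≤ 1 / 2) (hα0 : 0 ≤ α) (hα1 : α ≤ 1) :
    (2 - (2:ℝ) ^ α) * x ^ α * (1 - x) ^ α ≤ (1 - x) ^ α - (1 - x ^ α) := by
  have h2 : (2:ℝ) ^ α ≤ 2 := by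
    simpa using rpow_le_rpow_of_exponent_le one_le_two hα1
  have hb : (1 - x) ^ α ≤ 1 := rpow_le_one (by linarith) (by linarith) hα0
  have ha : 0 ≤ x ^ α := rpow_nonneg hx0 α
  have hconc := one_le_two_rpow_sub_one_mul_rpow_add_one_sub_rpow hx0 hx hα0 hα1
  calc (2 - (2:ℝ) ^ α) * x ^ α * (1 - x) ^ α ≤ (2 - 2 ^ α) * x ^ α :=
        mul_le_of_le_one_right (mul_nonneg (by linarith) ha) hb
    _ ≤ (1 - x) ^ α - (1 - x ^ α) := by linarith

theorem stmt1 (x α : ℝ) (hx0 : 0 ≤ x) (hx1 : x ≤ 1) (hα0 : 0 ≤ α) (hα1 : α ≤ 1) :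
    (2 - (2:ℝ) ^ α) * x ^ α * (1 - x) ^ α ≤ (1 - x) ^ α - (1 - x ^ α) := by
  rcases le_total x (1 / 2) with hx | hx
  · exact two_sub_two_rpow_mul_rpow_mul_rpow_le_of_le_half hx0 hx hα0 hα1
  · have hsymm := two_sub_two_rpow_mul_rpow_mul_rpow_le_of_le_half (x := 1 - x)
      (by linarith) (by linarith) hα0 hα1
    rw [sub_sub_cancel] at hsymm
    linarith
end

section
/- For all real numbers x and α with 0 ≤ x ≤ 1 and 0 ≤ α ≤ 1, one has (1-x)^α - (1 - x^α) ≤ x^α * (1-x)^α. -/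
-- The gap `a * b - (b - (1 - a))` factors as `(1 - a) * (1 - b)`.
theorem sub_one_sub_le_mul_of_le_one {a b : ℝ} (ha : a ≤ 1) (hb : b ≤ 1) :
    b - (1 - a) ≤ a * b := by
  nlinarith [mul_nonneg (sub_nonneg.2 ha) (sub_nonneg.2 hb)]

theorem stmt2_general (x α : ℝ) (hx0 : 0 ≤ x) (hx1 : x ≤ 1) (hα0 : 0 ≤ α) :
    (1 - x) ^ α - (1 - x ^ α) ≤ x ^ α * (1 - x) ^ α :=
  sub_one_sub_le_mul_of_le_one (Real.rpow_le_one hx0 hx1 hα0)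
    (Real.rpow_le_one (by linarith) (by linarith) hα0)

theorem stmt2 (x α : ℝ) (hx0 : 0 ≤ x) (hx1 : x ≤ 1) (hα0 : 0 ≤ α) (hα1 : α ≤ 1) :
    (1 - x) ^ α - (1 - x ^ α) ≤ x ^ α * (1 - x) ^ α :=
  stmt2_general x α hx0 hx1 hα0
end

section
/- Let 0 < H < 1 and define G(x) = x^(2H) - (1/4) * (1 + x^(2H) - (1-x)^(2H))^2 for x in [0,1]. Then for all x in [0,1], (1/2)*(2 - 2^H) * x^(2H) * (1-x)^(2H) ≤ G(x) ≤ 2 * x^(2H) * (1-x)^(2H). -/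
/-!
With `a = x ^ (2H)` and `b = (1 - x) ^ (2H)` one has `G x = a b - (a + b - 1) ^ 2 / 4`, so the
upper bound is immediate and the lower bound amounts to `(a + b - 1) ^ 2 ≤ 2 ^ (H + 1) a b`.
For `2H ≤ 1` the powers dominate `x` and `1 - x`, so `0 ≤ a + b - 1 ≤ min a b` and
`(a + b - 1) ^ 2 ≤ a b`. For `2H ≥ 1` they lie between the squares and the first powers, so
`0 ≤ 1 - a - b ≤ 2 x (1 - x)`; as `x (1 - x) ≤ 1/4`, this gives
`(a + b - 1) ^ 2 ≤ 4 (x (1 - x)) ^ 2 ≤ 4 ^ (2H - 1) a b`, and `4 ^ (2H - 1) ≤ 2 ^ (H + 1)`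
as `H ≤ 1`.
-/

open Real

lemma sq_add_sub_one_le_mul {a b : ℝ} (ha : a ≤ 1) (hb : b ≤ 1) (hab : 1 ≤ a + b) :
    (a + b - 1) ^ 2 ≤ a * b := by
  rw [sq]
  exact mul_le_mul (by linarith) (by linarith) (by linarith) (by linarith)

lemma sq_le_rpow_sub_mul_rpow {p c β : ℝ} (hp : 0 ≤ p) (hpc : p ≤ c) (hβ : β ≤ 2) :
    p ^ 2 ≤ c ^ (2 - β) * p ^ β := by
  calc p ^ 2 = p ^ (2 - β) * p ^ β := by
        rw [← rpow_add' hp (by norm_num), sub_add_cancel, rpow_two]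
    _ ≤ c ^ (2 - β) * p ^ β :=
        mul_le_mul_of_nonneg_right (rpow_le_rpow hp hpc (by linarith)) (rpow_nonneg hp β)

lemma sq_rpow_add_rpow_sub_one_le_of_le_one {x β : ℝ} (hx0 : 0 ≤ x) (hx1 : x ≤ 1)
    (hβ0 : 0 ≤ β) (hβ1 : β ≤ 1) :
    (x ^ β + (1 - x) ^ β - 1) ^ 2 ≤ x ^ β * (1 - x) ^ β := by
  have hx : x ≤ x ^ β := by
    simpa using rpow_le_rpow_of_exponent_ge' hx0 hx1 hβ0 hβ1
  have hy : 1 - x ≤ (1 - x) ^ β := by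
    simpa using rpow_le_rpow_of_exponent_ge' (sub_nonneg.2 hx1) (by linarith) hβ0 hβ1
  exact sq_add_sub_one_le_mul (rpow_le_one hx0 hx1 hβ0)
    (rpow_le_one (sub_nonneg.2 hx1) (by linarith) hβ0) (by linarith)

lemma sq_rpow_add_rpow_sub_one_le_of_one_le {x β : ℝ} (hx0 : 0 ≤ x) (hx1 : x ≤ 1)
    (hβ1 : 1 ≤ β) (hβ2 : β ≤ 2) :
    (x ^ β + (1 - x) ^ β - 1) ^ 2 ≤ 4 ^ (β - 1) * (x ^ β * (1 - x) ^ β) := by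
  have hy0 : 0 ≤ 1 - x := sub_nonneg.2 hx1
  have hβ0 : 0 ≤ β := by linarith
  have hx : x ^ β ≤ x := by
    simpa using rpow_le_rpow_of_exponent_ge' hx0 hx1 zero_le_one hβ1
  have hy : (1 - x) ^ β ≤ 1 - x := by
    simpa using rpow_le_rpow_of_exponent_ge' hy0 (by linarith) zero_le_one hβ1
  have hx2 : x ^ 2 ≤ x ^ β := by
    simpa using rpow_le_rpow_of_exponent_ge' hx0 hx1 hβ0 hβ2
  have hy2 : (1 - x) ^ 2 ≤ (1 - x) ^ β := by
    simpa using rpow_le_rpow_of_exponent_ge' hy0 (by linarith) hβ0 hβ2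
  have hp0 : 0 ≤ x * (1 - x) := mul_nonneg hx0 hy0
  have hp : x * (1 - x) ≤ 1 / 4 := by nlinarith [sq_nonneg (x - 1 / 2)]
  have hconst : 4 * (1 / 4 : ℝ) ^ (2 - β) = 4 ^ (β - 1) := by
    rw [one_div, inv_rpow (by norm_num), ← rpow_neg (by norm_num), neg_sub,
      rpow_sub_one (by norm_num), rpow_sub (by norm_num), rpow_two]
    ring
  calc (x ^ β + (1 - x) ^ β - 1) ^ 2 ≤ 4 * (x * (1 - x)) ^ 2 := by nlinarith
    _ ≤ 4 * ((1 / 4) ^ (2 - β) * (x * (1 - x)) ^ β) := by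
        gcongr; exact sq_le_rpow_sub_mul_rpow hp0 hp hβ2
    _ = 4 ^ (β - 1) * (x ^ β * (1 - x) ^ β) := by
        rw [← hconst, mul_rpow hx0 hy0]; ring

lemma four_rpow_two_mul_sub_one_le {H : ℝ} (hH : H ≤ 1) :
    (4 : ℝ) ^ (2 * H - 1) ≤ 2 * 2 ^ H := by
  calc (4 : ℝ) ^ (2 * H - 1) = 2 ^ (4 * H - 2) := by
        rw [show (4 : ℝ) = 2 ^ (2 : ℝ) by norm_num, ← rpow_mul (by norm_num)]; ring_nf
    _ ≤ 2 ^ (H + 1) := rpow_le_rpow_of_exponent_le (by norm_num) (by linarith)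
    _ = 2 * 2 ^ H := by rw [rpow_add_one (by norm_num)]; ring

lemma sq_rpow_add_rpow_sub_one_le {H x : ℝ} (hH0 : 0 ≤ H) (hH1 : H ≤ 1) (hx0 : 0 ≤ x)
    (hx1 : x ≤ 1) :
    (x ^ (2 * H) + (1 - x) ^ (2 * H) - 1) ^ 2 ≤
      2 * 2 ^ H * (x ^ (2 * H) * (1 - x) ^ (2 * H)) := by
  have hab : 0 ≤ x ^ (2 * H) * (1 - x) ^ (2 * H) :=
    mul_nonneg (rpow_nonneg hx0 _) (rpow_nonneg (sub_nonneg.2 hx1) _)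
  rcases le_total H (1 / 2) with hH | hH
  · have h2 : (1 : ℝ) ≤ 2 * 2 ^ H := by
      linarith [one_le_rpow (by norm_num : (1 : ℝ) ≤ 2) hH0]
    calc _ ≤ x ^ (2 * H) * (1 - x) ^ (2 * H) :=
          sq_rpow_add_rpow_sub_one_le_of_le_one hx0 hx1 (by linarith) (by linarith)
      _ ≤ _ := le_mul_of_one_le_left hab h2
  · calc _ ≤ 4 ^ (2 * H - 1) * (x ^ (2 * H) * (1 - x) ^ (2 * H)) :=
          sq_rpow_add_rpow_sub_one_le_of_one_le hx0 hx1 (by linarith) (by linarith)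
      _ ≤ _ := mul_le_mul_of_nonneg_right (four_rpow_two_mul_sub_one_le hH1) hab

theorem stmt3 (H : ℝ) (hH0 : 0 < H) (hH1 : H < 1)
    (G : ℝ → ℝ)
    (hG : ∀ x, G x = x ^ (2*H) - (1/4) * (1 + x ^ (2*H) - (1 - x) ^ (2*H))^2) :
    ∀ x : ℝ, 0 ≤ x → x ≤ 1 →
      (1/2) * (2 - (2:ℝ) ^ H) * x ^ (2*H) * (1 - x) ^ (2*H) ≤ G x ∧
      G x ≤ 2 * x ^ (2*H) * (1 - x) ^ (2*H) := by
  intro x hx0 hx1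
  set a := x ^ (2 * H)
  set b := (1 - x) ^ (2 * H)
  have hab : 0 ≤ a * b := mul_nonneg (rpow_nonneg hx0 _) (rpow_nonneg (sub_nonneg.2 hx1) _)
  have hGx : G x = a * b - (a + b - 1) ^ 2 / 4 := by rw [hG x]; ring
  have hsq := sq_rpow_add_rpow_sub_one_le hH0.le hH1.le hx0 hx1
  rw [hGx]
  constructor <;> nlinarith [sq_nonneg (a + b - 1)]
end

section
/- Let 0 < H < 1 and 0 < s ≤ t. Set μ = (1/2)*(t^(2H) + s^(2H) - (t-s)^(2H)). Then (1/2)*(2 - 2^H) * s^(2H) * (t-s)^(2H) ≤ t^(2H) * s^(2H) - μ^2 ≤ 2 * s^(2H) * (t-s)^(2H). -/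
/-!
Put `a = s^H`, `b = (t-s)^H`, `c = t^H`. Then `t^(2H) s^(2H) - μ^2 = a²b² - ((c² - a² - b²)/2)²`,
which gives the upper bound at once and is a quarter of Heron's product
`(a + b - c)(a + b + c)(c + b - a)(c + a - b)`. For the lower bound, concavity of `x ↦ x^H`
gives `a + b - c ≥ (2 - 2^H) min(a, b)`, and the other three factors are bounded below by the
sides since `a, b ≤ c`.
-/

open Real Set

theorem ConcaveOn.map_add_map_le_of_add_eq {D : Set ℝ} {f : ℝ → ℝ} (hf : ConcaveOn ℝ D f)
    {x y u v : ℝ} (hx : x ∈ D) (hy : y ∈ D) (hu : u ∈ Icc x y) (huv : u + v = x + y) :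
    f x + f y ≤ f u + f v := by
  obtain ⟨hxu, huy⟩ := hu
  rcases hxu.trans huy |>.eq_or_lt with rfl | hxy
  · obtain rfl : u = x := le_antisymm huy hxu
    obtain rfl : v = u := by linarith
    rfl
  set θ := (u - x) / (y - x)
  have hθ0 : 0 ≤ θ := div_nonneg (by linarith) (by linarith)
  have hθ1 : θ ≤ 1 := (div_le_one (by linarith)).2 (by linarith)
  have hu : (1 - θ) • x + θ • y = u := by
    simp only [smul_eq_mul, θ]; field_simp; ring
  have hv : θ • x + (1 - θ) • y = v := by
    rw [show v = x + y - u by linarith]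
    simp only [smul_eq_mul, θ]; field_simp; ring
  have h₁ := hf.2 hx hy (sub_nonneg.2 hθ1) hθ0 (sub_add_cancel 1 θ)
  have h₂ := hf.2 hx hy hθ0 (sub_nonneg.2 hθ1) (add_sub_cancel θ 1)
  rw [hu] at h₁
  rw [hv] at h₂
  simp only [smul_eq_mul] at h₁ h₂
  linarith

theorem rpow_add_add_rpow_le {H v w : ℝ} (hH0 : 0 ≤ H) (hH1 : H ≤ 1) (hv : 0 ≤ v) (hvw : v ≤ w) :
    (v + w) ^ H + v ^ H ≤ 2 ^ H * v ^ H + w ^ H := by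
  rw [← mul_rpow zero_le_two hv, add_comm ((v + w) ^ H)]
  exact (concaveOn_rpow hH0 hH1).map_add_map_le_of_add_eq hv
    (show 0 ≤ v + w by linarith) ⟨by linarith, by linarith⟩ (by ring)

theorem half_mul_sq_mul_sq_le_of_le_add_sub {a b c κ : ℝ} (ha : 0 ≤ a) (hab : a ≤ b)
    (hbc : b ≤ c) (hκ : 0 ≤ κ) (h : κ * a ≤ a + b - c) :
    κ / 2 * (a ^ 2 * b ^ 2) ≤ a ^ 2 * b ^ 2 - ((c ^ 2 - a ^ 2 - b ^ 2) / 2) ^ 2 :=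
  calc κ / 2 * (a ^ 2 * b ^ 2) = κ * a * b * a * (2 * b) / 4 := by ring
    _ ≤ (a + b - c) * (c + b - a) * (c + a - b) * (a + b + c) / 4 := by
      have : 0 ≤ κ * a := by positivity
      have : 0 ≤ a + b - c := this.trans h
      have : 0 ≤ c + b - a := by linarith
      have : 0 ≤ c + a - b := by linarith
      gcongr <;> linarith
    _ = a ^ 2 * b ^ 2 - ((c ^ 2 - a ^ 2 - b ^ 2) / 2) ^ 2 := by ring

/-- The right-hand side is the Gram determinant of the fBm increments over `[0, p]` and
`[p, p + q]`. -/
theorem rpow_increment_gram_ge {H p q : ℝ} (hH0 : 0 ≤ H) (hH1 : H ≤ 1) (hp : 0 ≤ p)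
    (hq : 0 ≤ q) :
    (2 - 2 ^ H) / 2 * (p ^ (2 * H) * q ^ (2 * H))
      ≤ p ^ (2 * H) * q ^ (2 * H) - (((p + q) ^ (2 * H) - p ^ (2 * H) - q ^ (2 * H)) / 2) ^ 2 := by
  wlog hpq : p ≤ q generalizing p q
  · convert this hq hp (le_of_not_ge hpq) using 1 <;> ring_nf
  have hsq : ∀ x : ℝ, 0 ≤ x → x ^ (2 * H) = (x ^ H) ^ 2 := fun x hx => by
    rw [mul_comm, rpow_mul hx, rpow_two]
  rw [hsq p hp, hsq q hq, hsq (p + q) (by linarith)]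
  refine half_mul_sq_mul_sq_le_of_le_add_sub (by positivity) (rpow_le_rpow hp hpq hH0)
    (rpow_le_rpow hq (by linarith) hH0) ?_ ?_
  · linarith [rpow_le_rpow_of_exponent_le one_le_two hH1, rpow_one (2 : ℝ)]
  · linarith [rpow_add_add_rpow_le hH0 hH1 hp hpq]

theorem stmt4 (H s t : ℝ) (hH0 : 0 < H) (hH1 : H < 1) (hs : 0 < s) (hst : s ≤ t)
    (μ : ℝ) (hμ : μ = (1/2) * (t ^ (2*H) + s ^ (2*H) - (t - s) ^ (2*H))) :
    (1/2) * (2 - (2:ℝ) ^ H) * s ^ (2*H) * (t - s) ^ (2*H)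
      ≤ t ^ (2*H) * s ^ (2*H) - μ^2 ∧
    t ^ (2*H) * s ^ (2*H) - μ^2 ≤ 2 * s ^ (2*H) * (t - s) ^ (2*H) := by
  obtain ⟨q, hq, rfl⟩ : ∃ q, 0 ≤ q ∧ t = s + q := ⟨t - s, by linarith, by ring⟩
  rw [add_sub_cancel_left] at hμ ⊢
  have hgram : (s + q) ^ (2 * H) * s ^ (2 * H) - μ ^ 2 = s ^ (2 * H) * q ^ (2 * H)
      - (((s + q) ^ (2 * H) - s ^ (2 * H) - q ^ (2 * H)) / 2) ^ 2 := by
    rw [hμ]; ring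
  have hlower := rpow_increment_gram_ge hH0.le hH1.le hs.le hq
  have hprod : 0 ≤ s ^ (2 * H) * q ^ (2 * H) := by positivity
  rw [hgram]
  constructor
  · linarith
  · linarith [sq_nonneg ((s + q) ^ (2 * H) - s ^ (2 * H) - q ^ (2 * H))]
end

section
/- Let 0 < H < 1/2 and 0 < s' < t' < s < t. Define R(a,b,c,d) = (1/2)*((|a-d|)^(2H) + (|b-c|)^(2H) - (|a-c|)^(2H) - (|b-d|)^(2H)) (the covariance E[(B^H_a - B^H_b)(B^H_c - B^H_d)]). Then |R(t,s,t',s')| ≤ ((t-s)*(t'-s')) / (s-t')^(2-2H). -/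
/-! Write `α = 2H` and `c = t - s`. The covariance is half the change of the increment
`g x = (x + c) ^ α - x ^ α` between `x = s - t'` and `x = s - s'`. The mean value inequality for
`u ↦ u ^ (α - 1)` bounds `|g'| = α |(u + c) ^ (α - 1) - u ^ (α - 1)|` on `[s - t', ∞)` by
`α (1 - α) c (s - t') ^ (α - 2)`; applied once more, to `g`, it gives the claim, as `α (1 - α) ≤ 2`. -/

open Set

theorem Real.abs_rpow_sub_rpow_le {p a x y : ℝ} (hp : p ≤ 1) (ha : 0 < a) (hx : a ≤ x)
    (hy : a ≤ y) : |y ^ p - x ^ p| ≤ |p| * a ^ (p - 1) * |y - x| := by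
  have hderiv : ∀ u ∈ Ici a, HasDerivWithinAt (fun u : ℝ => u ^ p) (p * u ^ (p - 1)) (Ici a) u :=
    fun u hu => (Real.hasDerivAt_rpow_const (Or.inl (ha.trans_le hu).ne')).hasDerivWithinAt
  have hbound : ∀ u ∈ Ici a, ‖p * u ^ (p - 1)‖ ≤ |p| * a ^ (p - 1) := fun u hu => by
    rw [Real.norm_eq_abs, abs_mul, abs_of_pos (Real.rpow_pos_of_pos (ha.trans_le hu) _)]
    exact mul_le_mul_of_nonneg_left
      (Real.rpow_le_rpow_of_nonpos ha hu (by linarith)) (abs_nonneg p)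
  exact (convex_Ici a).norm_image_sub_le_of_norm_hasDerivWithin_le hderiv hbound hx hy

theorem Real.abs_rpow_increment_sub_le {α a c x y : ℝ} (hα0 : 0 ≤ α) (hα1 : α ≤ 1)
    (ha : 0 < a) (hc : 0 ≤ c) (hx : a ≤ x) (hy : a ≤ y) :
    |((y + c) ^ α - y ^ α) - ((x + c) ^ α - x ^ α)|
      ≤ α * (1 - α) * c * a ^ (α - 2) * |y - x| := by
  have hderiv : ∀ u ∈ Ici a, HasDerivWithinAt (fun u : ℝ => (u + c) ^ α - u ^ α)
      (α * ((u + c) ^ (α - 1) - u ^ (α - 1))) (Ici a) u := fun u hu => by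
    have hu : 0 < u := ha.trans_le hu
    have hshift := (Real.hasDerivAt_rpow_const (p := α) (Or.inl (by positivity : u + c ≠ 0)))
      |>.comp_add_const u c
    rw [mul_sub]
    exact (hshift.sub (Real.hasDerivAt_rpow_const (Or.inl hu.ne'))).hasDerivWithinAt
  have hbound : ∀ u ∈ Ici a, ‖α * ((u + c) ^ (α - 1) - u ^ (α - 1))‖
      ≤ α * (1 - α) * c * a ^ (α - 2) := fun u hu => by
    have hu : a ≤ u := hu
    have key := Real.abs_rpow_sub_rpow_le (p := α - 1) (x := u) (y := u + c) (by linarith) ha hu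
      (by linarith)
    rw [show α - 1 - 1 = α - 2 by ring, abs_of_nonpos (by linarith : α - 1 ≤ 0),
      add_sub_cancel_left, abs_of_nonneg hc] at key
    rw [Real.norm_eq_abs, abs_mul, abs_of_nonneg hα0]
    calc α * |(u + c) ^ (α - 1) - u ^ (α - 1)| ≤ α * (-(α - 1) * a ^ (α - 2) * c) :=
          mul_le_mul_of_nonneg_left key hα0
      _ = α * (1 - α) * c * a ^ (α - 2) := by ring
  exact (convex_Ici a).norm_image_sub_le_of_norm_hasDerivWithin_le hderiv hbound hx hy

theorem stmt7_general (H : ℝ) (hH0 : 0 < H) (hH1 : H < 1/2)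
    (s' t' s t : ℝ) (h2 : s' < t') (h3 : t' < s) (h4 : s < t)
    (R : ℝ → ℝ → ℝ → ℝ → ℝ)
    (hR : ∀ a b c d, R a b c d =
      (1/2) * (|a - d| ^ (2*H) + |b - c| ^ (2*H) - |a - c| ^ (2*H) - |b - d| ^ (2*H))) :
    |R t s t' s'| ≤ ((t - s) * (t' - s')) / (s - t') ^ (2 - 2*H) := by
  have ha : 0 < s - t' := by linarith
  have hR' : R t s t' s' = (1/2) * (((s - s' + (t - s)) ^ (2*H) - (s - s') ^ (2*H))
      - ((s - t' + (t - s)) ^ (2*H) - (s - t') ^ (2*H))) := by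
    rw [hR, abs_of_pos (by linarith : 0 < t - s'), abs_of_pos ha,
      abs_of_pos (by linarith : 0 < t - t'), abs_of_pos (by linarith : 0 < s - s'),
      show s - s' + (t - s) = t - s' by ring, show s - t' + (t - s) = t - t' by ring]
    ring
  have hincr := Real.abs_rpow_increment_sub_le (α := 2*H) (c := t - s) (by linarith)
    (by linarith) ha (by linarith) le_rfl (by linarith : s - t' ≤ s - s')
  rw [show s - s' - (s - t') = t' - s' by ring, abs_of_pos (by linarith : 0 < t' - s')] at hincr
  rw [hR', abs_mul, abs_of_pos (by norm_num : (0:ℝ) < 1/2),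
    div_eq_mul_inv _ ((s - t') ^ (2 - 2*H)), ← Real.rpow_neg ha.le, neg_sub]
  have hcoef : 2*H * (1 - 2*H) ≤ 2 := by nlinarith
  have hrest : 0 ≤ (t - s) * (s - t') ^ (2*H - 2) * (t' - s') := by
    have := Real.rpow_pos_of_pos ha (2*H - 2)
    have := mul_pos (sub_pos.2 h4) (sub_pos.2 h2)
    positivity
  nlinarith

theorem stmt7 (H : ℝ) (hH0 : 0 < H) (hH1 : H < 1/2)
    (s' t' s t : ℝ) (h1 : 0 < s') (h2 : s' < t') (h3 : t' < s) (h4 : s < t)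
    (R : ℝ → ℝ → ℝ → ℝ → ℝ)
    (hR : ∀ a b c d, R a b c d =
      (1/2) * (|a - d| ^ (2*H) + |b - c| ^ (2*H) - |a - c| ^ (2*H) - |b - d| ^ (2*H))) :
    |R t s t' s'| ≤ ((t - s) * (t' - s')) / (s - t') ^ (2 - 2*H) :=
  stmt7_general H hH0 hH1 s' t' s t h2 h3 h4 R hR
end

section
/- Let 0 < H < 1/2 and 0 < s' < t' < s < t. Define R = (1/2)*((t-s')^(2H) + (s-t')^(2H) - (t-t')^(2H) - (s-s')^(2H)). Then there is a constant C depending only on H such that |R| ≤ C * (t-s)^(2H) * (t'-s')^(2H) / (s-t')^(2H). -/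
/-!
Put `α = 2H`, `a = t - s`, `b = s - t'`, `c = t' - s'`. Then `2R` is the mixed second
difference `(a+b+c)^α - (a+b)^α - (b+c)^α + b^α` of `x ^ α`. Two mean value steps write it as
`α (α - 1) a c η^(α-2)` with `η > b`, so its size is at most `a c b^(α-2)`; subadditivity of
`x ^ α` bounds it by `a^α` and by `c^α`, hence by `(a c)^(α/2)`. Interpolating between the last
two bounds with weight `θ = α / (2 - α)` (that is, `H / (1 - H)`) gives `(a c)^α / b^α`.
-/

open Set Real

def mixedDiff (f : ℝ → ℝ) (a b c : ℝ) : ℝ := f (a + b + c) - f (a + b) - f (b + c) + f b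

lemma mixedDiff_comm (f : ℝ → ℝ) (a b c : ℝ) : mixedDiff f a b c = mixedDiff f c b a := by
  unfold mixedDiff
  ring_nf

theorem exists_mixedDiff_eq_of_hasDerivAt {f f' f'' : ℝ → ℝ} {a b c : ℝ}
    (ha : 0 < a) (hc : 0 < c)
    (hf : ∀ x ∈ Icc b (a + b + c), HasDerivAt f (f' x) x)
    (hf' : ∀ x ∈ Icc b (a + b + c), HasDerivAt f' (f'' x) x) :
    ∃ η ∈ Ioo b (a + b + c), mixedDiff f a b c = a * c * f'' η := by
  have hg : ∀ x ∈ Icc b (a + b), HasDerivAt (fun x ↦ f (x + c) - f x) (f' (x + c) - f' x) x :=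
    fun x hx ↦ ((hf (x + c) ⟨by linarith [hx.1], by linarith [hx.2]⟩).comp_add_const x c).sub
      (hf x ⟨hx.1, by linarith [hx.2]⟩)
  obtain ⟨ξ, hξ, hξeq⟩ := exists_hasDerivAt_eq_slope _ _ (by linarith : b < a + b)
    (fun x hx ↦ (hg x hx).continuousAt.continuousWithinAt)
    (fun x hx ↦ hg x (Ioo_subset_Icc_self hx))
  have hξc : Icc ξ (ξ + c) ⊆ Icc b (a + b + c) := Icc_subset_Icc hξ.1.le (by linarith [hξ.2])
  obtain ⟨η, hη, hηeq⟩ := exists_hasDerivAt_eq_slope f' f'' (by linarith : ξ < ξ + c)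
    (fun x hx ↦ (hf' x (hξc hx)).continuousAt.continuousWithinAt)
    (fun x hx ↦ hf' x (hξc (Ioo_subset_Icc_self hx)))
  refine ⟨η, ⟨hξ.1.trans hη.1, by linarith [hη.2, hξ.2]⟩, ?_⟩
  simp only [add_sub_cancel_left, add_sub_cancel_right] at hξeq hηeq
  rw [hηeq, mul_assoc, mul_div_cancel₀ _ hc.ne', hξeq, mul_div_cancel₀ _ ha.ne',
    mixedDiff]
  ring

theorem exists_mixedDiff_rpow_eq (α : ℝ) {a b c : ℝ} (ha : 0 < a) (hb : 0 < b)
    (hc : 0 < c) : ∃ η ∈ Ioo b (a + b + c),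
      mixedDiff (· ^ α) a b c = α * (α - 1) * a * c * η ^ (α - 2) := by
  have hpos : ∀ x ∈ Icc b (a + b + c), x ≠ 0 := fun x hx ↦ (hb.trans_le hx.1).ne'
  obtain ⟨η, hη, h⟩ :=
    exists_mixedDiff_eq_of_hasDerivAt (f'' := fun x ↦ α * ((α - 1) * x ^ (α - 2))) ha hc
    (fun x hx ↦ hasDerivAt_rpow_const (Or.inl (hpos x hx)))
    (fun x hx ↦ by
      simpa [sub_sub, one_add_one_eq_two] using
        (hasDerivAt_rpow_const (p := α - 1) (Or.inl (hpos x hx))).const_mul α)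
  exact ⟨η, hη, by rw [h]; ring⟩

lemma le_rpow_mul_rpow_of_le_of_le {x u v θ : ℝ} (hx : 0 ≤ x) (hxu : x ≤ u) (hxv : x ≤ v)
    (hθ0 : 0 ≤ θ) (hθ1 : θ ≤ 1) : x ≤ u ^ (1 - θ) * v ^ θ :=
  calc x = x ^ (1 - θ) * x ^ θ := by rw [← rpow_add' hx (by simp), sub_add_cancel, rpow_one]
    _ ≤ u ^ (1 - θ) * v ^ θ := mul_le_mul (rpow_le_rpow hx hxu (by linarith))
        (rpow_le_rpow hx hxv hθ0) (by positivity) (rpow_nonneg (hx.trans hxu) _)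

section

variable {α a b c : ℝ}

lemma mixedDiff_rpow_nonpos (hα0 : 0 ≤ α) (hα1 : α ≤ 1) (ha : 0 < a) (hb : 0 < b)
    (hc : 0 < c) : mixedDiff (· ^ α) a b c ≤ 0 := by
  obtain ⟨η, hη, h⟩ := exists_mixedDiff_rpow_eq α ha hb hc
  have hη0 : 0 < η := hb.trans hη.1
  rw [h, mul_assoc, mul_assoc]
  exact mul_nonpos_of_nonpos_of_nonneg (mul_nonpos_of_nonneg_of_nonpos hα0 (by linarith))
    (by positivity)

lemma neg_mixedDiff_rpow_le_mul (hα : α ≤ 2) (ha : 0 < a) (hb : 0 < b) (hc : 0 < c) :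
    -mixedDiff (· ^ α) a b c ≤ a * c * b ^ (α - 2) := by
  obtain ⟨η, hη, h⟩ := exists_mixedDiff_rpow_eq α ha hb hc
  have hmono : η ^ (α - 2) ≤ b ^ (α - 2) := rpow_le_rpow_of_nonpos hb hη.1.le (by linarith)
  have hcoef : α * (1 - α) ≤ 1 := by nlinarith [sq_nonneg (α - 1 / 2)]
  calc -mixedDiff (· ^ α) a b c = α * (1 - α) * (a * c * η ^ (α - 2)) := by rw [h]; ring
    _ ≤ 1 * (a * c * b ^ (α - 2)) := by
        have hη0 : 0 < η := hb.trans hη.1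
        gcongr
    _ = a * c * b ^ (α - 2) := one_mul _

lemma neg_mixedDiff_rpow_le_rpow_right (hα0 : 0 ≤ α) (hα1 : α ≤ 1) (ha : 0 ≤ a)
    (hb : 0 ≤ b) (hc : 0 ≤ c) : -mixedDiff (· ^ α) a b c ≤ c ^ α := by
  have hsub : (b + c) ^ α ≤ b ^ α + c ^ α := rpow_add_le_add_rpow hb hc hα0 hα1
  have hmono : (a + b) ^ α ≤ (a + b + c) ^ α :=
    rpow_le_rpow (by positivity) (by linarith) hα0
  simp only [mixedDiff]
  linarith

lemma neg_mixedDiff_rpow_le_rpow_left (hα0 : 0 ≤ α) (hα1 : α ≤ 1) (ha : 0 ≤ a)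
    (hb : 0 ≤ b) (hc : 0 ≤ c) : -mixedDiff (· ^ α) a b c ≤ a ^ α := by
  rw [mixedDiff_comm]
  exact neg_mixedDiff_rpow_le_rpow_right hα0 hα1 hc hb ha

theorem abs_mixedDiff_rpow_le (hα0 : 0 ≤ α) (hα1 : α ≤ 1) (ha : 0 < a) (hb : 0 < b)
    (hc : 0 < c) : |mixedDiff (· ^ α) a b c| ≤ a ^ α * c ^ α / b ^ α := by
  have hnonpos := mixedDiff_rpow_nonpos hα0 hα1 ha hb hc
  rw [abs_of_nonpos hnonpos]
  have hgeom :
      -mixedDiff (· ^ α) a b c ≤ (a ^ α) ^ (1 - 1 / 2 : ℝ) * (c ^ α) ^ (1 / 2 : ℝ) :=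
    le_rpow_mul_rpow_of_le_of_le (neg_nonneg.2 hnonpos)
      (neg_mixedDiff_rpow_le_rpow_left hα0 hα1 ha.le hb.le hc.le)
      (neg_mixedDiff_rpow_le_rpow_right hα0 hα1 ha.le hb.le hc.le) (by norm_num) (by norm_num)
  set θ := α / (2 - α) with hθ
  have hθ0 : 0 ≤ θ := div_nonneg hα0 (by linarith)
  have hθ1 : θ ≤ 1 := (div_le_one (by linarith)).2 (by linarith)
  have hexp : α * (1 / 2) * (1 - θ) + θ = α := by
    rw [hθ]; field_simp [show 2 - α ≠ 0 by linarith]; ring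
  have hb_exp : (α - 2) * θ = -α := by
    rw [hθ]; field_simp [show 2 - α ≠ 0 by linarith]; ring
  calc -mixedDiff (· ^ α) a b c
      ≤ ((a ^ α) ^ (1 - 1 / 2 : ℝ) * (c ^ α) ^ (1 / 2 : ℝ)) ^ (1 - θ) *
          (a * c * b ^ (α - 2)) ^ θ :=
        le_rpow_mul_rpow_of_le_of_le (neg_nonneg.2 hnonpos) hgeom
          (neg_mixedDiff_rpow_le_mul (by linarith) ha hb hc) hθ0 hθ1
    _ = a ^ (α * (1 / 2) * (1 - θ) + θ) * c ^ (α * (1 / 2) * (1 - θ) + θ) *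
          b ^ ((α - 2) * θ) := by
        simp (disch := positivity) only [mul_rpow, ← rpow_mul, rpow_add ha, rpow_add hc]
        ring_nf
    _ = a ^ α * c ^ α / b ^ α := by rw [hexp, hb_exp, rpow_neg hb.le, div_eq_mul_inv]

end

theorem stmt8 (H : ℝ) (hH0 : 0 < H) (hH1 : H < 1/2) :
    ∃ C : ℝ, 0 < C ∧ ∀ s' t' s t : ℝ, 0 < s' → s' < t' → t' < s → s < t →
      |(1/2) * ((t - s') ^ (2*H) + (s - t') ^ (2*H) - (t - t') ^ (2*H) - (s - s') ^ (2*H))|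
        ≤ C * (t - s) ^ (2*H) * (t' - s') ^ (2*H) / (s - t') ^ (2*H) := by
  refine ⟨1, one_pos, fun s' t' s t _ hst' ht's hst ↦ ?_⟩
  have hR : (t - s') ^ (2*H) + (s - t') ^ (2*H) - (t - t') ^ (2*H) - (s - s') ^ (2*H)
      = mixedDiff (· ^ (2*H)) (t - s) (s - t') (t' - s') := by
    simp only [mixedDiff]
    ring_nf
  rw [hR, abs_mul, abs_of_pos (by norm_num : (0:ℝ) < 1/2), one_mul]
  have hbound := abs_mixedDiff_rpow_le (by linarith : 0 ≤ 2*H) (by linarith : 2*H ≤ 1)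
    (sub_pos.2 hst) (sub_pos.2 ht's) (sub_pos.2 hst')
  have hnonneg := abs_nonneg (mixedDiff (· ^ (2*H)) (t - s) (s - t') (t' - s'))
  linarith
end

section
/- Let 0 < H < 1/2 and 0 < s' < s < t' < t (interlaced intervals). Define R = (1/2)*((t-s')^(2H) + (t'-s)^(2H) - (t-t')^(2H) - (s-s')^(2H)). Then |R| ≤ 3 * (t-s)^(2H) * (t'-s')^(2H) / (t'-s)^(2H). -/
/-!
Write `a = s - s'`, `b = t' - s`, `c = t - t'` and `p = 2H ∈ (0, 1)`, so that
`R = ½((a + b + c)^p + b^p - c^p - a^p)`. Subadditivity of `x ↦ x^p` gives `R ≤ b^p`, and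
dropping the nonnegative terms gives `R ≥ -(a^p + c^p)/2`. Each of `a^p`, `b^p`, `c^p` is at most
`(a + b)^p (b + c)^p / b^p`, since one factor dominates it and the other dominates `b^p`;
so the bound holds even with constant `1` in place of `3`.
-/

open Real

lemma le_mul_div_of_le_of_le {x y z w : ℝ} (hxy : x ≤ y) (hy : 0 ≤ y) (hw : 0 < w)
    (hwz : w ≤ z) : x ≤ y * z / w := by
  rw [le_div_iff₀ hw]
  nlinarith

lemma rpow_add_add_le_add_rpow {a b c p : ℝ} (ha : 0 ≤ a) (hb : 0 ≤ b) (hc : 0 ≤ c)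
    (hp : 0 ≤ p) (hp1 : p ≤ 1) : (a + b + c) ^ p ≤ a ^ p + b ^ p + c ^ p :=
  calc (a + b + c) ^ p ≤ (a + b) ^ p + c ^ p :=
        rpow_add_le_add_rpow (add_nonneg ha hb) hc hp hp1
    _ ≤ a ^ p + b ^ p + c ^ p := by
        gcongr
        exact rpow_add_le_add_rpow ha hb hp hp1

lemma abs_half_overlap_rpow_le {a b c p : ℝ} (ha : 0 ≤ a) (hb : 0 < b) (hc : 0 ≤ c)
    (hp : 0 ≤ p) (hp1 : p ≤ 1) :
    |(1/2) * ((a + b + c) ^ p + b ^ p - c ^ p - a ^ p)|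
      ≤ (a + b) ^ p * (b + c) ^ p / b ^ p := by
  have hbp : 0 < b ^ p := rpow_pos_of_pos hb p
  have hb_le_ab : b ^ p ≤ (a + b) ^ p := rpow_le_rpow hb.le (by linarith) hp
  have hb_le_bc : b ^ p ≤ (b + c) ^ p := rpow_le_rpow hb.le (by linarith) hp
  have hA : a ^ p ≤ (a + b) ^ p * (b + c) ^ p / b ^ p :=
    le_mul_div_of_le_of_le (rpow_le_rpow ha (by linarith) hp) (by positivity) hbp hb_le_bc
  have hB : b ^ p ≤ (a + b) ^ p * (b + c) ^ p / b ^ p :=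
    le_mul_div_of_le_of_le hb_le_ab (by positivity) hbp hb_le_bc
  have hC : c ^ p ≤ (a + b) ^ p * (b + c) ^ p / b ^ p := by
    rw [mul_comm]
    exact le_mul_div_of_le_of_le (rpow_le_rpow hc (by linarith) hp) (by positivity) hbp
      hb_le_ab
  have hsub := rpow_add_add_le_add_rpow ha hb.le hc hp hp1
  have hS : 0 ≤ (a + b + c) ^ p := by positivity
  rw [abs_le]
  constructor <;> linarith

theorem stmt9_general (H : ℝ) (hH0 : 0 < H) (hH1 : H < 1/2)
    (s' s t' t : ℝ) (h2 : s' < s) (h3 : s < t') (h4 : t' < t) :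
    |(1/2) * ((t - s') ^ (2*H) + (t' - s) ^ (2*H) - (t - t') ^ (2*H) - (s - s') ^ (2*H))|
      ≤ 3 * (t - s) ^ (2*H) * (t' - s') ^ (2*H) / (t' - s) ^ (2*H) := by
  have key := abs_half_overlap_rpow_le (a := s - s') (b := t' - s) (c := t - t') (p := 2 * H)
    (by linarith) (by linarith) (by linarith) (by linarith) (by linarith)
  rw [show s - s' + (t' - s) + (t - t') = t - s' by ring,
    show s - s' + (t' - s) = t' - s' by ring, show t' - s + (t - t') = t - s by ring] at key
  have hX : 0 ≤ (t' - s') ^ (2 * H) * (t - s) ^ (2 * H) / (t' - s) ^ (2 * H) := by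
    have : 0 ≤ t' - s' := by linarith
    have : 0 ≤ t - s := by linarith
    positivity
  calc _ ≤ (t' - s') ^ (2 * H) * (t - s) ^ (2 * H) / (t' - s) ^ (2 * H) := key
    _ ≤ 3 * ((t' - s') ^ (2 * H) * (t - s) ^ (2 * H) / (t' - s) ^ (2 * H)) := by linarith
    _ = 3 * (t - s) ^ (2*H) * (t' - s') ^ (2*H) / (t' - s) ^ (2*H) := by ring

theorem stmt9 (H : ℝ) (hH0 : 0 < H) (hH1 : H < 1/2)
    (s' s t' t : ℝ) (h1 : 0 < s') (h2 : s' < s) (h3 : s < t') (h4 : t' < t) :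
    |(1/2) * ((t - s') ^ (2*H) + (t' - s) ^ (2*H) - (t - t') ^ (2*H) - (s - s') ^ (2*H))|
      ≤ 3 * (t - s) ^ (2*H) * (t' - s') ^ (2*H) / (t' - s) ^ (2*H) :=
  stmt9_general H hH0 hH1 s' s t' t h2 h3 h4
end

section
/- Let 0 < H < 1/2 and t > s > r > 0. Then |E[B^H_r (B^H_t - B^H_s)]| ≤ (t-s)^(2H), where E[B^H_r (B^H_t - B^H_s)] = (1/2)*((t^(2H) - s^(2H)) - ((t-r)^(2H) - (s-r)^(2H))). -/
/- Both brackets are increments of the increasing, subadditive map x ↦ x ^ (2H) over intervals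
of length t - s, so each lies in [0, (t - s) ^ (2H)]. -/

lemma Real.rpow_sub_rpow_le_rpow_sub {x y p : ℝ} (hx : 0 ≤ x) (hxy : x ≤ y) (hp0 : 0 ≤ p)
    (hp1 : p ≤ 1) : y ^ p - x ^ p ≤ (y - x) ^ p := by
  have h := Real.rpow_add_le_add_rpow (sub_nonneg.2 hxy) hx hp0 hp1
  rw [sub_add_cancel] at h
  linarith

lemma Real.rpow_sub_rpow_mem_Icc {x y p : ℝ} (hx : 0 ≤ x) (hxy : x ≤ y) (hp0 : 0 ≤ p)
    (hp1 : p ≤ 1) : y ^ p - x ^ p ∈ Set.Icc 0 ((y - x) ^ p) :=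
  ⟨sub_nonneg.2 (Real.rpow_le_rpow hx hxy hp0), Real.rpow_sub_rpow_le_rpow_sub hx hxy hp0 hp1⟩

lemma abs_half_mul_sub_le {a b c : ℝ} (ha : a ∈ Set.Icc 0 c) (hb : b ∈ Set.Icc 0 c) :
    |1 / 2 * (a - b)| ≤ c := by
  have hab : |a - b| ≤ c := abs_sub_le_of_nonneg_of_le ha.1 ha.2 hb.1 hb.2
  rw [abs_mul, abs_of_pos (by norm_num : (0 : ℝ) < 1 / 2)]
  linarith [abs_nonneg (a - b)]

theorem stmt11 (H r s t : ℝ) (hH0 : 0 < H) (hH1 : H < 1/2)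
    (hr : 0 < r) (hrs : r < s) (hst : s < t) :
    |(1/2) * ((t ^ (2*H) - s ^ (2*H)) - ((t - r) ^ (2*H) - (s - r) ^ (2*H)))|
      ≤ (t - s) ^ (2*H) := by
  have hp0 : 0 ≤ 2 * H := by linarith
  have hp1 : 2 * H ≤ 1 := by linarith
  have hts := Real.rpow_sub_rpow_mem_Icc (by linarith) hst.le hp0 hp1
  have hts_shift := Real.rpow_sub_rpow_mem_Icc (x := s - r) (y := t - r) (by linarith)
    (by linarith) hp0 hp1
  rw [sub_sub_sub_cancel_right] at hts_shift
  exact abs_half_mul_sub_le hts hts_shift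
end

section
/- Let 0 < H < 1/2 and t > s > r > 0. Then |E[B^H_t (B^H_s - B^H_r)]| ≤ (s-r)^(2H), where E[B^H_t (B^H_s - B^H_r)] = (1/2)*((s^(2H) - r^(2H)) - ((t-s)^(2H) - (t-r)^(2H))). -/
/- Both increments s^(2H) - r^(2H) and (t-r)^(2H) - (t-s)^(2H) of the concave function x ↦ x^(2H)
lie in [0, (s-r)^(2H)]: they are nonnegative by monotonicity and bounded by subadditivity of
x ↦ x^p for p ≤ 1. The covariance is half their sum. -/

lemma Real.rpow_sub_rpow_le_rpow_sub_s12 {p a b : ℝ} (ha : 0 ≤ a) (hab : a ≤ b) (hp : 0 ≤ p)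
    (hp1 : p ≤ 1) : b ^ p - a ^ p ≤ (b - a) ^ p := by
  have h := Real.rpow_add_le_add_rpow (sub_nonneg.2 hab) ha hp hp1
  rw [sub_add_cancel] at h
  linarith

lemma Real.rpow_sub_rpow_mem_Icc_s12 {p a b : ℝ} (ha : 0 ≤ a) (hab : a ≤ b) (hp : 0 ≤ p)
    (hp1 : p ≤ 1) : b ^ p - a ^ p ∈ Set.Icc 0 ((b - a) ^ p) :=
  ⟨sub_nonneg.2 (Real.rpow_le_rpow ha hab hp), Real.rpow_sub_rpow_le_rpow_sub_s12 ha hab hp hp1⟩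

theorem stmt12 (H r s t : ℝ) (hH0 : 0 < H) (hH1 : H < 1/2)
    (hr : 0 < r) (hrs : r < s) (hst : s < t) :
    |(1/2) * ((s ^ (2*H) - r ^ (2*H)) - ((t - s) ^ (2*H) - (t - r) ^ (2*H)))|
      ≤ (s - r) ^ (2*H) := by
  have hp0 : 0 ≤ 2 * H := by positivity
  have hp1 : 2 * H ≤ 1 := by linarith
  obtain ⟨hA0, hA⟩ := Real.rpow_sub_rpow_mem_Icc_s12 hr.le hrs.le hp0 hp1
  obtain ⟨hB0, hB⟩ := Real.rpow_sub_rpow_mem_Icc_s12 (a := t - s) (b := t - r)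
    (by linarith) (by linarith) hp0 hp1
  rw [sub_sub_sub_cancel_left] at hB
  rw [abs_le]
  constructor <;> linarith
end
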